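/- Correctness of the translation from BPEL to PiCore: for every BPEL activity B and every state s, B is bisimilar to its translation at s: Σ ⊢ (B, s) ≈ (compile B, s). -/

import Mathlib

namespace PiCore

/-- Event systems of the PiCore event specification language. -/
inductive EventSys (Lbl Prog St : Type) : Type where
  | basic (ev : Set (Lbl × Set St × Prog))
  | atom (ev : Set (Lbl × Set St × Prog))
  | trig (P : Prog)
  | seq (S1 S2 : EventSys Lbl Prog St)
  | choice (S1 S2 : EventSys Lbl Prog St)
  | join (S1 S2 : EventSys Lbl Prog St)
  | iter (b : Set St) (S : EventSys Lbl Prog St)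

/-- Transition kinds of event systems: anonymous τ, event entry, atomic event entry. -/
inductive TranKind (Lbl : Type) : Type where
  | tau
  | evt (l : Lbl)
  | aevt (l : Lbl)

variable {Lbl Prog St Env : Type} (K : Type)
variable (ptran : Env → Prog × St → Prog × St → Prop) (bot : Prog)

/-- Labelled small-step semantics of event systems. -/
inductive esStep (Γ : Env) :
    EventSys Lbl Prog St × St → TranKind Lbl × K → EventSys Lbl Prog St × St → Prop where
  | basicEvt {ev : Set (Lbl × Set St × Prog)} {l g P s κ}
      (h1 : (l, g, P) ∈ ev) (h2 : s ∈ g) :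
      esStep Γ (.basic ev, s) (.evt l, κ) (.trig P, s)
  | atomEvt {ev : Set (Lbl × Set St × Prog)} {l g P s t κ}
      (h1 : (l, g, P) ∈ ev) (h2 : s ∈ g)
      (h3 : Relation.ReflTransGen (fun c c' => ptran Γ c c') (P, s) (bot, t)) :
      esStep Γ (.atom ev, s) (.aevt l, κ) (.trig bot, t)
  | trigEvt {P Q s t κ} (h : ptran Γ (P, s) (Q, t)) :
      esStep Γ (.trig P, s) (.tau, κ) (.trig Q, t)
  | seqStep {S1 S1' S2 s t} {δ : TranKind Lbl × K}
      (h : esStep Γ (S1, s) δ (S1', t)) (hne : S1' ≠ .trig bot) :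
      esStep Γ (.seq S1 S2, s) δ (.seq S1' S2, t)
  | seqFin {S1 S2 s t} {δ : TranKind Lbl × K}
      (h : esStep Γ (S1, s) δ (.trig bot, t)) :
      esStep Γ (.seq S1 S2, s) δ (S2, t)
  | choice1 {S1 S2 S1' s t} {δ : TranKind Lbl × K}
      (h : esStep Γ (S1, s) δ (S1', t)) :
      esStep Γ (.choice S1 S2, s) δ (S1', t)
  | choice2 {S1 S2 S2' s t} {δ : TranKind Lbl × K}
      (h : esStep Γ (S2, s) δ (S2', t)) :
      esStep Γ (.choice S1 S2, s) δ (S2', t)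
  | join1 {S1 S2 S1' s t} {δ : TranKind Lbl × K}
      (h : esStep Γ (S1, s) δ (S1', t)) :
      esStep Γ (.join S1 S2, s) δ (.join S1' S2, t)
  | join2 {S1 S2 S2' s t} {δ : TranKind Lbl × K}
      (h : esStep Γ (S2, s) δ (S2', t)) :
      esStep Γ (.join S1 S2, s) δ (.join S1 S2', t)
  | joinFin {s κ} :
      esStep Γ (.join (.trig bot) (.trig bot), s) (.tau, κ) (.trig bot, s)
  | iterT {b S s κ} (h : s ∈ b) (hne : S ≠ .trig bot) :
      esStep Γ (.iter b S, s) (.tau, κ) (.seq S (.iter b S), s)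
  | iterF {b S s κ} (h : s ∉ b) :
      esStep Γ (.iter b S, s) (.tau, κ) (.trig bot, s)

/-- Linear computations of event systems. -/
inductive cpts (Γ : Env) : List (EventSys Lbl Prog St × St) → Prop where
  | one {S s} : cpts Γ [(S, s)]
  | env {S s t cs} (h : cpts Γ ((S, t) :: cs)) : cpts Γ ((S, s) :: (S, t) :: cs)
  | act {S1 S2 s t cs} {δ : TranKind Lbl × K}
      (h1 : esStep K ptran bot Γ (S1, s) δ (S2, t))
      (h2 : cpts Γ ((S2, t) :: cs)) : cpts Γ ((S1, s) :: (S2, t) :: cs)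

/-- Sequential lifting of a computation. -/
def liftSeq (Q : EventSys Lbl Prog St) (c : List (EventSys Lbl Prog St × St)) :
    List (EventSys Lbl Prog St × St) :=
  c.map fun p => (.seq p.1 Q, p.2)

/-- Modular computations of event systems. -/
inductive cptsM (Γ : Env) : List (EventSys Lbl Prog St × St) → Prop where
  | one {S s} : cptsM Γ [(S, s)]
  | env {S s t cs} (h : cptsM Γ ((S, t) :: cs)) : cptsM Γ ((S, s) :: (S, t) :: cs)
  | trigEvt {P Q s t cs} (h : ptran Γ (P, s) (Q, t))
      (h2 : cptsM Γ ((.trig Q, t) :: cs)) :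
      cptsM Γ ((.trig P, s) :: (.trig Q, t) :: cs)
  | basicEvt {ev : Set (Lbl × Set St × Prog)} {l g P s cs}
      (h1 : (l, g, P) ∈ ev) (h2 : s ∈ g)
      (h3 : cptsM Γ ((.trig P, s) :: cs)) :
      cptsM Γ ((.basic ev, s) :: (.trig P, s) :: cs)
  | atomEvt {ev : Set (Lbl × Set St × Prog)} {l g P s t cs}
      (h1 : (l, g, P) ∈ ev) (h2 : s ∈ g)
      (h3 : Relation.ReflTransGen (fun c c' => ptran Γ c c') (P, s) (bot, t))
      (h4 : cptsM Γ ((.trig bot, t) :: cs)) :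
      cptsM Γ ((.atom ev, s) :: (.trig bot, t) :: cs)
  | seqStep {S1 S1' S2 s t cs} {δ : TranKind Lbl × K}
      (h : esStep K ptran bot Γ (S1, s) δ (S1', t)) (hne : S1' ≠ .trig bot)
      (h2 : cptsM Γ ((.seq S1' S2, t) :: cs)) :
      cptsM Γ ((.seq S1 S2, s) :: (.seq S1' S2, t) :: cs)
  | seqFin {S1 S2 s t cs} {δ : TranKind Lbl × K}
      (h : esStep K ptran bot Γ (S1, s) δ (.trig bot, t))
      (h2 : cptsM Γ ((S2, t) :: cs)) :
      cptsM Γ ((.seq S1 S2, s) :: (S2, t) :: cs)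
  | chc1 {S1 S2 S1' s t cs} {δ : TranKind Lbl × K}
      (h : esStep K ptran bot Γ (S1, s) δ (S1', t))
      (h2 : cptsM Γ ((S1', t) :: cs)) :
      cptsM Γ ((.choice S1 S2, s) :: (S1', t) :: cs)
  | chc2 {S1 S2 S2' s t cs} {δ : TranKind Lbl × K}
      (h : esStep K ptran bot Γ (S2, s) δ (S2', t))
      (h2 : cptsM Γ ((S2', t) :: cs)) :
      cptsM Γ ((.choice S1 S2, s) :: (S2', t) :: cs)
  | join1 {S1 S2 S1' s t cs} {δ : TranKind Lbl × K}
      (h : esStep K ptran bot Γ (S1, s) δ (S1', t))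
      (h2 : cptsM Γ ((.join S1' S2, t) :: cs)) :
      cptsM Γ ((.join S1 S2, s) :: (.join S1' S2, t) :: cs)
  | join2 {S1 S2 S2' s t cs} {δ : TranKind Lbl × K}
      (h : esStep K ptran bot Γ (S2, s) δ (S2', t))
      (h2 : cptsM Γ ((.join S1 S2', t) :: cs)) :
      cptsM Γ ((.join S1 S2, s) :: (.join S1 S2', t) :: cs)
  | joinFin {s cs} (h : cptsM Γ ((.trig bot, s) :: cs)) :
      cptsM Γ ((.join (.trig bot) (.trig bot), s) :: (.trig bot, s) :: cs)
  | iterF {b S s cs} (h : s ∉ b) (h2 : cptsM Γ ((.trig bot, s) :: cs)) :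
      cptsM Γ ((.iter b S, s) :: (.trig bot, s) :: cs)
  | iterTOne {b S s cs} (h : s ∈ b) (h2 : cptsM Γ ((S, s) :: cs)) :
      cptsM Γ ((.iter b S, s) :: liftSeq (.iter b S) ((S, s) :: cs))
  | iterTMore {b S s t cs cs'} {δ : TranKind Lbl × K}
      (h : s ∈ b) (h2 : cptsM Γ ((S, s) :: cs))
      (h3 : esStep K ptran bot Γ (((S, s) :: cs).getLast (List.cons_ne_nil _ _)) δ
              (.trig bot, t))
      (h4 : cptsM Γ ((.iter b S, t) :: cs')) :
      cptsM Γ ((.iter b S, s) ::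
        (liftSeq (.iter b S) ((S, s) :: cs) ++ (.iter b S, t) :: cs'))



end PiCore

namespace BPEL

open PiCore

/-- An IMP-like program language: the terminal program ⊥, atomic state
transformations `basic f`, and sequencing. -/
inductive Imp (St : Type) : Type where
  | fin
  | basic (f : St → St)
  | seq (P Q : Imp St)

/-- The `SKIP` statement. -/
def SKIP (St : Type) : Imp St := .basic id

/-- Small-step semantics of the IMP-like language. -/
inductive impTran {St : Type} : Imp St × St → Imp St × St → Prop where
  | basic {f : St → St} {s : St} : impTran (.basic f, s) (.fin, f s)
  | seqStep {P P' Q : Imp St} {s t : St}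
      (h : impTran (P, s) (P', t)) (hne : P' ≠ .fin) :
      impTran (.seq P Q, s) (.seq P' Q, t)
  | seqFin {P Q : Imp St} {s t : St} (h : impTran (P, s) (.fin, t)) :
      impTran (.seq P Q, s) (Q, t)

/-- Flow element of a BPEL activity: optional targets (a join condition and a
list of target links) and optional sources (links with transition conditions). -/
structure FlowEle (St : Type) : Type where
  targets : Option ((St → Prop) × List String)
  sources : Option (List (String × (St → Prop)))

mutual
/-- Abstract syntax of (a core subset of) BPEL activities. -/
inductive Activity (St : Type) : Type where
  | invoke (fls : FlowEle St) (ptl ptt opn : String) (spc : St → St)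
      (cts : List (String × Activity St)) (cta : Activity St)
  | receive (fls : FlowEle St) (ptl ptt opn : String) (spc : St → St)
  | reply (fls : FlowEle St) (ptl ptt opn : String)
  | assign (fls : FlowEle St) (spc : St → St)
  | wait (fls : FlowEle St) (time : ℕ)
  | empty (fls : FlowEle St)
  | seq (A1 A2 : Activity St)
  | ifA (c : Set St) (A1 A2 : Activity St)
  | whileA (c : Set St) (A : Activity St)
  | flow (A1 A2 : Activity St)
  | pick (H1 H2 : EventHandler St)
  | fin

/-- BPEL event handlers. -/
inductive EventHandler (St : Type) : Type where
  | onMessage (ptl ptt opn : String) (spc : St → St) (A : Activity St)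
  | onAlarm (time : ℕ) (A : Activity St)
end

section Sem
variable {St : Type}
variable (tick : St → ℕ)
variable (targetsSat : Option ((St → Prop) × List String) → St → Prop)
variable (fireSources : Option (List (String × (St → Prop))) → St → St)

/-- Small-step semantics of BPEL event handlers. -/
inductive ehStep : EventHandler St → St → Activity St → St → Prop where
  | onMessage {ptl ptt opn spc A s} :
      ehStep (.onMessage ptl ptt opn spc A) s A (spc s)
  | onAlarm {time A s} (h : time > tick s) :
      ehStep (.onAlarm time A) s A s

/-- Small-step operational semantics of BPEL activities. -/
inductive bpelStep : Activity St → St → Activity St → St → Prop where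
  | invokeSuc {fls ptl ptt opn spc cts cta s}
      (h : targetsSat fls.targets s) :
      bpelStep (.invoke fls ptl ptt opn spc cts cta) s .fin
        (fireSources fls.sources (spc s))
  | invokeFault {fls ptl ptt opn spc cts cta s} {evh : Activity St}
      (h : targetsSat fls.targets s)
      (hm : evh ∈ cts.map Prod.snd ∨ evh = cta) :
      bpelStep (.invoke fls ptl ptt opn spc cts cta) s evh
        (fireSources fls.sources s)
  | receive {fls ptl ptt opn spc s} (h : targetsSat fls.targets s) :
      bpelStep (.receive fls ptl ptt opn spc) s .fin
        (fireSources fls.sources (spc s))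
  | reply {fls ptl ptt opn s} (h : targetsSat fls.targets s) :
      bpelStep (.reply fls ptl ptt opn) s .fin (fireSources fls.sources s)
  | assign {fls spc s} (h : targetsSat fls.targets s) :
      bpelStep (.assign fls spc) s .fin (fireSources fls.sources (spc s))
  | wait {fls time s} (h : targetsSat fls.targets s) (ht : time > tick s) :
      bpelStep (.wait fls time) s .fin (fireSources fls.sources s)
  | empty {fls s} (h : targetsSat fls.targets s) :
      bpelStep (.empty fls) s .fin (fireSources fls.sources s)
  | seqStep {A1 A1' A2 s t} (h : bpelStep A1 s A1' t) (hne : A1' ≠ .fin) :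
      bpelStep (.seq A1 A2) s (.seq A1' A2) t
  | seqFin {A1 A2 s t} (h : bpelStep A1 s .fin t) :
      bpelStep (.seq A1 A2) s A2 t
  | ifT {c A1 A2 s} (h : s ∈ c) : bpelStep (.ifA c A1 A2) s A1 s
  | ifF {c A1 A2 s} (h : s ∉ c) : bpelStep (.ifA c A1 A2) s A2 s
  | whileT {c A s} (h : s ∈ c) (hne : A ≠ .fin) :
      bpelStep (.whileA c A) s (.seq A (.whileA c A)) s
  | whileF {c A s} (h : s ∉ c) : bpelStep (.whileA c A) s .fin s
  | flow1 {A1 A1' A2 s t} (h : bpelStep A1 s A1' t) :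
      bpelStep (.flow A1 A2) s (.flow A1' A2) t
  | flow2 {A1 A2 A2' s t} (h : bpelStep A2 s A2' t) :
      bpelStep (.flow A1 A2) s (.flow A1 A2') t
  | flowFin {s} : bpelStep (.flow .fin .fin) s .fin s
  | pick1 {H1 H2 A s t} (h : ehStep tick H1 s A t) :
      bpelStep (.pick H1 H2) s A t
  | pick2 {H1 H2 A s t} (h : ehStep tick H2 s A t) :
      bpelStep (.pick H1 H2) s A t

end Sem

/-- Labels of events in the PiCore translation of BPEL, encoding the activity
kind and its partner-link / port-type / operation names. -/
inductive EvtLbl : Type where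
  | invoke (ptl ptt opn : String)
  | receive (ptl ptt opn : String)
  | reply (ptl ptt opn : String)
  | assign
  | wait
  | empty
  | ifT
  | ifF
  | onMessage (ptl ptt opn : String)
  | onAlarm

/-- Event systems of the BPEL translation. -/
abbrev ES (St : Type) : Type := EventSys EvtLbl (Imp St) St

/-- Nondeterministic choice of a list of event systems. -/
def chooseList {St : Type} : List (ES St) → ES St
  | [] => .trig .fin
  | [a] => a
  | a :: b :: xs => .choice a (chooseList (b :: xs))

section Compile
variable {St : Type}
variable (tick : St → ℕ)
variable (targetsSat : Option ((St → Prop) × List String) → St → Prop)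
variable (fireSources : Option (List (String × (St → Prop))) → St → St)

/-- The failure event of an `invoke` activity: it only fires the source links. -/
def failEvt (fls : FlowEle St) (ptl ptt opn : String) : ES St :=
  .atom {(EvtLbl.invoke ptl ptt opn, {s | targetsSat fls.targets s},
          Imp.basic (fireSources fls.sources))}

mutual
/-- The verified translation from BPEL activities to PiCore event systems. -/
def compile : Activity St → ES St
  | .invoke fls ptl ptt opn spc cts cta =>
      .choice
        (.atom {(EvtLbl.invoke ptl ptt opn, {s | targetsSat fls.targets s},
            Imp.seq (.basic spc) (.basic (fireSources fls.sources)))})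
        (chooseList
          (.seq (failEvt targetsSat fireSources fls ptl ptt opn) (compile cta) ::
            compileList fls ptl ptt opn cts))
  | .receive fls ptl ptt opn spc =>
      .atom {(EvtLbl.receive ptl ptt opn, {s | targetsSat fls.targets s},
          Imp.seq (.basic spc) (.basic (fireSources fls.sources)))}
  | .reply fls ptl ptt opn =>
      .atom {(EvtLbl.reply ptl ptt opn, {s | targetsSat fls.targets s},
          Imp.basic (fireSources fls.sources))}
  | .assign fls spc =>
      .atom {(EvtLbl.assign, {s | targetsSat fls.targets s},
          Imp.seq (.basic spc) (.basic (fireSources fls.sources)))}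
  | .wait fls time =>
      .atom {(EvtLbl.wait, {s | targetsSat fls.targets s ∧ time > tick s},
          Imp.basic (fireSources fls.sources))}
  | .empty fls =>
      .atom {(EvtLbl.empty, {s | targetsSat fls.targets s},
          Imp.basic (fireSources fls.sources))}
  | .seq A1 A2 => .seq (compile A1) (compile A2)
  | .ifA c A1 A2 =>
      .choice (.seq (.atom {(EvtLbl.ifT, c, SKIP St)}) (compile A1))
              (.seq (.atom {(EvtLbl.ifF, cᶜ, SKIP St)}) (compile A2))
  | .whileA c A => .iter c (compile A)
  | .flow A1 A2 => .join (compile A1) (compile A2)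
  | .pick H1 H2 => .choice (compileEH H1) (compileEH H2)
  | .fin => .trig .fin

/-- Translation of BPEL event handlers. -/
def compileEH : EventHandler St → ES St
  | .onMessage ptl ptt opn spc A =>
      .seq (.atom {(EvtLbl.onMessage ptl ptt opn, Set.univ, Imp.basic spc)})
           (compile A)
  | .onAlarm time A =>
      .seq (.atom {(EvtLbl.onAlarm, {s | time > tick s}, SKIP St)})
           (compile A)

/-- Translation of the fault handlers of an `invoke` activity. -/
def compileList (fls : FlowEle St) (ptl ptt opn : String) :
    List (String × Activity St) → List (ES St)
  | [] => []
  | (_, a) :: rest =>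
      .seq (failEvt targetsSat fireSources fls ptl ptt opn) (compile a) ::
        compileList fls ptl ptt opn rest
end

end Compile



section Bisim
variable {St : Type}
variable (tick : St → ℕ)
variable (targetsSat : Option ((St → Prop) × List String) → St → Prop)
variable (fireSources : Option (List (String × (St → Prop))) → St → St)

/-- The small-step semantics of the PiCore event systems used by the BPEL
translation (over the IMP-like language, with a trivial static configuration
and trivial event-system identifiers). -/
abbrev esStepB :
    ES St × St → PiCore.TranKind EvtLbl × Unit → ES St × St → Prop :=
  PiCore.esStep Unit (fun _ : Unit => impTran) Imp.fin ()

/-- Computations of BPEL activities: nonempty lists of configurations closed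
under singletons, environment steps and BPEL steps. -/
inductive bpelCpts : List (Activity St × St) → Prop where
  | one {B s} : bpelCpts [(B, s)]
  | env {B s t cs} (h : bpelCpts ((B, t) :: cs)) :
      bpelCpts ((B, s) :: (B, t) :: cs)
  | step {B B' s t cs}
      (h : bpelStep tick targetsSat fireSources B s B' t)
      (h2 : bpelCpts ((B', t) :: cs)) :
      bpelCpts ((B, s) :: (B', t) :: cs)

/-- Pointwise equivalence of a BPEL computation and a PiCore computation:
equal length, equal states at each position, and at each position the event
system is the translation of the activity. -/
def treq : List (Activity St × St) → List (ES St × St) → Prop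
  | [], [] => True
  | (B, s) :: tr1, (S, t) :: tr2 =>
      compile tick targetsSat fireSources B = S ∧ s = t ∧ treq tr1 tr2
  | _, _ => False

/-- Trace equivalence of a BPEL activity and a PiCore event system from a
common initial state: `Σ ⊢ (B,s) ≈≈ (ES,s)`. -/
def TraceEq (B : Activity St) (s : St) (S : ES St) : Prop :=
  (∀ tr : List (Activity St × St),
     bpelCpts tick targetsSat fireSources tr → tr.head? = some (B, s) →
     ∃ tr' : List (ES St × St),
       (PiCore.cpts Unit (fun _ : Unit => impTran) Imp.fin () tr' ∧
         tr'.head? = some (S, s)) ∧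
       treq tick targetsSat fireSources tr tr') ∧
  (∀ tr' : List (ES St × St),
     PiCore.cpts Unit (fun _ : Unit => impTran) Imp.fin () tr' →
     tr'.head? = some (S, s) →
     ∃ tr : List (Activity St × St),
       (bpelCpts tick targetsSat fireSources tr ∧ tr.head? = some (B, s)) ∧
       treq tick targetsSat fireSources tr tr')

/-- `R` is a bisimulation between BPEL activities and PiCore event systems. -/
def IsBisim (R : Activity St → St → ES St → Prop) : Prop :=
  ∀ B s S, R B s S →
    (∀ B' t, bpelStep tick targetsSat fireSources B s B' t →
      ∃ (δ : PiCore.TranKind EvtLbl × Unit) (S' : ES St),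
        esStepB (S, s) δ (S', t) ∧ R B' t S') ∧
    (∀ (δ : PiCore.TranKind EvtLbl × Unit) (S' : ES St) (t : St),
      esStepB (S, s) δ (S', t) →
      ∃ B' : Activity St,
        bpelStep tick targetsSat fireSources B s B' t ∧ R B' t S') ∧
    S = compile tick targetsSat fireSources B

/-- Bisimilarity of a BPEL activity and a PiCore event system at a state
(`Σ ⊢ (B,s) ≈ (ES,s)`): the greatest bisimulation. -/
def Bisim (B : Activity St) (s : St) (S : ES St) : Prop :=
  ∃ R : Activity St → St → ES St → Prop,
    IsBisim tick targetsSat fireSources R ∧ R B s S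

end Bisim

end BPEL

/-!
The graph of `compile`, `{(B, s, compile B)}`, is itself a bisimulation. Forward, by induction
on the BPEL step, each BPEL rule is matched by the PiCore rule of the compiled construct.
Backward, by recursion on the activity, a PiCore step of `compile B` is inverted. The key
observations are that an atomic event runs its straight-line program to completion, so its final
state is the program's denotation `Imp.run`; that a guarded event `seq (atom {e}) S` can
therefore only step to `S`; and that `compile B = trig fin` exactly when `B = fin`, so the
side conditions `A ≠ fin` and `S ≠ trig fin` of the two semantics correspond.
-/

namespace PiCore

variable {Lbl Prog St Env K : Type} {ptran : Env → Prog × St → Prog × St → Prop}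
  {bot : Prog} {Γ : Env}

theorem esStep_choice_iff {S1 S2 S' : EventSys Lbl Prog St} {s t : St} {δ : TranKind Lbl × K} :
    esStep K ptran bot Γ (.choice S1 S2, s) δ (S', t) ↔
      esStep K ptran bot Γ (S1, s) δ (S', t) ∨ esStep K ptran bot Γ (S2, s) δ (S', t) := by
  constructor
  · intro h
    cases h with
    | choice1 h => exact .inl h
    | choice2 h => exact .inr h
  · exact fun h => h.elim .choice1 .choice2

theorem esStep_atom_singleton_inv {l : Lbl} {g : Set St} {P : Prog}
    {S' : EventSys Lbl Prog St} {s t : St} {δ : TranKind Lbl × K}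
    (h : esStep K ptran bot Γ (.atom {(l, g, P)}, s) δ (S', t)) :
    s ∈ g ∧ Relation.ReflTransGen (ptran Γ) (P, s) (bot, t) ∧ S' = .trig bot := by
  cases h with
  | atomEvt hmem hg hrun =>
    obtain ⟨-, rfl, rfl⟩ := hmem
    exact ⟨hg, hrun, rfl⟩

theorem esStep_seq_atom_singleton_inv {l : Lbl} {g : Set St} {P : Prog}
    {S2 S' : EventSys Lbl Prog St} {s t : St} {δ : TranKind Lbl × K}
    (h : esStep K ptran bot Γ (.seq (.atom {(l, g, P)}) S2, s) δ (S', t)) :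
    s ∈ g ∧ Relation.ReflTransGen (ptran Γ) (P, s) (bot, t) ∧ S' = S2 := by
  cases h with
  | seqStep h hne => exact absurd (esStep_atom_singleton_inv h).2.2 hne
  | seqFin h =>
    obtain ⟨hg, hrun, -⟩ := esStep_atom_singleton_inv h
    exact ⟨hg, hrun, rfl⟩

end PiCore

namespace BPEL

open PiCore Relation

variable {St : Type}

def Imp.run : Imp St → St → St
  | .fin => id
  | .basic f => f
  | .seq P Q => Q.run ∘ P.run

theorem impTran.run_eq {c c' : Imp St × St} (h : impTran c c') :
    c.1.run c.2 = c'.1.run c'.2 := by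
  induction h with
  | basic => rfl
  | seqStep _ _ ih | seqFin _ ih => simp [Imp.run, ih]

theorem Imp.eq_run_of_reflTransGen {P : Imp St} {s t : St}
    (h : ReflTransGen impTran (P, s) (.fin, t)) : t = P.run s := by
  suffices ∀ {c c'}, ReflTransGen impTran c c' → c.1.run c.2 = c'.1.run c'.2 from (this h).symm
  intro c c' h
  induction h with
  | refl => rfl
  | tail _ hstep ih => exact ih.trans hstep.run_eq

theorem not_impTran_fin {s : St} {c : Imp St × St} : ¬ impTran (.fin, s) c := nofun

theorem esStepB_atom_basic {l : EvtLbl} {g : Set St} {f : St → St} {s : St} (hg : s ∈ g) :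
    esStepB (.atom {(l, g, .basic f)}, s) (.aevt l, ()) (.trig .fin, f s) :=
  .atomEvt rfl hg (.single .basic)

theorem esStepB_atom_seq_basic {l : EvtLbl} {g : Set St} {f f' : St → St} {s : St}
    (hg : s ∈ g) :
    esStepB (.atom {(l, g, .seq (.basic f) (.basic f'))}, s) (.aevt l, ()) (.trig .fin, f' (f s)) :=
  .atomEvt rfl hg (.head (.seqFin .basic) (.single .basic))

theorem esStepB_chooseList_iff {L : List (ES St)} {s t : St} {δ : TranKind EvtLbl × Unit}
    {S' : ES St} :
    esStepB (chooseList L, s) δ (S', t) ↔ ∃ E ∈ L, esStepB (E, s) δ (S', t) := by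
  induction L with
  | nil =>
    simp only [List.not_mem_nil, false_and, exists_false, iff_false]
    rintro (_ | _ | ⟨h⟩)
    exact not_impTran_fin h
  | cons a L ih =>
    cases L with
    | nil => simp [chooseList]
    | cons b L => rw [List.exists_mem_cons_iff, ← ih]; exact esStep_choice_iff

section Compile

variable {tick : St → ℕ} {targetsSat : Option ((St → Prop) × List String) → St → Prop}
  {fireSources : Option (List (String × (St → Prop))) → St → St}

theorem compileList_eq_map (fls : FlowEle St) (ptl ptt opn : String)
    (cts : List (String × Activity St)) :
    compileList tick targetsSat fireSources fls ptl ptt opn cts =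
      (cts.map Prod.snd).map fun a => .seq (failEvt targetsSat fireSources fls ptl ptt opn)
        (compile tick targetsSat fireSources a) := by
  induction cts with
  | nil => simp [compileList]
  | cons p cts ih => simp [compileList, ih]

theorem compile_eq_trig_fin_iff {A : Activity St} :
    compile tick targetsSat fireSources A = .trig .fin ↔ A = .fin := by
  cases A <;> simp [compile]

theorem esStepB_atom_inv {l : EvtLbl} {g : Set St} {P : Imp St} {S' : ES St} {s t : St}
    {δ : TranKind EvtLbl × Unit} (h : esStepB (.atom {(l, g, P)}, s) δ (S', t)) :
    s ∈ g ∧ t = P.run s ∧ S' = .trig .fin :=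
  let ⟨hg, hrun, hS'⟩ := esStep_atom_singleton_inv h
  ⟨hg, Imp.eq_run_of_reflTransGen hrun, hS'⟩

theorem esStepB_seq_atom_inv {l : EvtLbl} {g : Set St} {P : Imp St} {S2 S' : ES St} {s t : St}
    {δ : TranKind EvtLbl × Unit} (h : esStepB (.seq (.atom {(l, g, P)}) S2, s) δ (S', t)) :
    s ∈ g ∧ t = P.run s ∧ S' = S2 :=
  let ⟨hg, hrun, hS'⟩ := esStep_seq_atom_singleton_inv h
  ⟨hg, Imp.eq_run_of_reflTransGen hrun, hS'⟩

theorem compileEH_step_of_ehStep {H : EventHandler St} {s t : St} {A : Activity St}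
    (h : ehStep tick H s A t) :
    ∃ δ, esStepB (compileEH tick targetsSat fireSources H, s) δ
      (compile tick targetsSat fireSources A, t) := by
  cases h with
  | onMessage => exact ⟨_, .seqFin (esStepB_atom_basic trivial)⟩
  | onAlarm h => exact ⟨_, .seqFin (esStepB_atom_basic h)⟩

theorem ehStep_of_compileEH_step {H : EventHandler St} {s t : St} {S' : ES St}
    {δ : TranKind EvtLbl × Unit}
    (h : esStepB (compileEH tick targetsSat fireSources H, s) δ (S', t)) :
    ∃ A, ehStep tick H s A t ∧ S' = compile tick targetsSat fireSources A := by
  cases H with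
  | onMessage =>
    obtain ⟨-, rfl, rfl⟩ := esStepB_seq_atom_inv h
    exact ⟨_, .onMessage, rfl⟩
  | onAlarm =>
    obtain ⟨hg, rfl, rfl⟩ := esStepB_seq_atom_inv h
    exact ⟨_, .onAlarm hg, rfl⟩

theorem compile_step_of_bpelStep {B B' : Activity St} {s t : St}
    (h : bpelStep tick targetsSat fireSources B s B' t) :
    ∃ δ, esStepB (compile tick targetsSat fireSources B, s) δ
      (compile tick targetsSat fireSources B', t) := by
  induction h with
  | invokeSuc h => exact ⟨_, .choice1 (esStepB_atom_seq_basic h)⟩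
  | @invokeFault fls ptl ptt opn _ cts cta _ evh h hm =>
    refine ⟨_, .choice2 (esStepB_chooseList_iff.mpr
      ⟨.seq (failEvt targetsSat fireSources fls ptl ptt opn)
        (compile tick targetsSat fireSources evh), ?_, .seqFin (esStepB_atom_basic h)⟩)⟩
    rw [compileList_eq_map, List.mem_cons, List.mem_map]
    rcases hm with hm | rfl
    · exact .inr ⟨_, hm, rfl⟩
    · exact .inl rfl
  | receive h | assign h => exact ⟨_, esStepB_atom_seq_basic h⟩
  | reply h | empty h => exact ⟨_, esStepB_atom_basic h⟩
  | wait h ht => exact ⟨_, esStepB_atom_basic ⟨h, ht⟩⟩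
  | seqStep _ hne ih => exact ih.imp fun _ h => .seqStep h (compile_eq_trig_fin_iff.not.mpr hne)
  | seqFin _ ih => exact ih.imp fun _ => .seqFin
  | ifT h => exact ⟨_, .choice1 (.seqFin (esStepB_atom_basic h))⟩
  | ifF h => exact ⟨_, .choice2 (.seqFin (esStepB_atom_basic h))⟩
  | whileT h hne => exact ⟨(_, ()), .iterT h (compile_eq_trig_fin_iff.not.mpr hne)⟩
  | whileF h => exact ⟨(_, ()), .iterF h⟩
  | flow1 _ ih => exact ih.imp fun _ => .join1
  | flow2 _ ih => exact ih.imp fun _ => .join2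
  | flowFin => exact ⟨(_, ()), .joinFin⟩
  | pick1 h => exact (compileEH_step_of_ehStep h).imp fun _ => .choice1
  | pick2 h => exact (compileEH_step_of_ehStep h).imp fun _ => .choice2

theorem bpelStep_of_compile_step (B : Activity St) {s t : St} {S' : ES St}
    {δ : TranKind EvtLbl × Unit}
    (h : esStepB (compile tick targetsSat fireSources B, s) δ (S', t)) :
    ∃ B', bpelStep tick targetsSat fireSources B s B' t ∧
      S' = compile tick targetsSat fireSources B' := by
  cases B with
  | invoke fls ptl ptt opn spc cts cta =>
    rcases esStep_choice_iff.mp h with h | h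
    · obtain ⟨hg, rfl, rfl⟩ := esStepB_atom_inv h
      exact ⟨.fin, .invokeSuc hg, rfl⟩
    · obtain ⟨E, hE, h⟩ := esStepB_chooseList_iff.mp h
      rw [compileList_eq_map, List.mem_cons, List.mem_map] at hE
      rcases hE with rfl | ⟨a, ha, rfl⟩
      · obtain ⟨hg, rfl, rfl⟩ := esStepB_seq_atom_inv h
        exact ⟨cta, .invokeFault hg (.inr rfl), rfl⟩
      · obtain ⟨hg, rfl, rfl⟩ := esStepB_seq_atom_inv h
        exact ⟨a, .invokeFault hg (.inl ha), rfl⟩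
  | receive =>
    obtain ⟨hg, rfl, rfl⟩ := esStepB_atom_inv h
    exact ⟨.fin, .receive hg, rfl⟩
  | reply =>
    obtain ⟨hg, rfl, rfl⟩ := esStepB_atom_inv h
    exact ⟨.fin, .reply hg, rfl⟩
  | assign =>
    obtain ⟨hg, rfl, rfl⟩ := esStepB_atom_inv h
    exact ⟨.fin, .assign hg, rfl⟩
  | wait =>
    obtain ⟨⟨hg, ht⟩, rfl, rfl⟩ := esStepB_atom_inv h
    exact ⟨.fin, .wait hg ht, rfl⟩
  | empty =>
    obtain ⟨hg, rfl, rfl⟩ := esStepB_atom_inv h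
    exact ⟨.fin, .empty hg, rfl⟩
  | seq A1 A2 =>
    cases h with
    | seqStep h hne =>
      obtain ⟨B1', hB, rfl⟩ := bpelStep_of_compile_step A1 h
      exact ⟨.seq B1' A2, .seqStep hB (compile_eq_trig_fin_iff.not.mp hne), rfl⟩
    | seqFin h =>
      obtain ⟨B1', hB, hfin⟩ := bpelStep_of_compile_step A1 h
      obtain rfl := compile_eq_trig_fin_iff.mp hfin.symm
      exact ⟨A2, .seqFin hB, rfl⟩
  | ifA c A1 A2 =>
    rcases esStep_choice_iff.mp h with h | h
    · obtain ⟨hc, rfl, rfl⟩ := esStepB_seq_atom_inv h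
      exact ⟨A1, .ifT hc, rfl⟩
    · obtain ⟨hc, rfl, rfl⟩ := esStepB_seq_atom_inv h
      exact ⟨A2, .ifF hc, rfl⟩
  | whileA c A =>
    cases h with
    | iterT hc hne =>
      exact ⟨.seq A (.whileA c A), .whileT hc (compile_eq_trig_fin_iff.not.mp hne), rfl⟩
    | iterF hc => exact ⟨.fin, .whileF hc, rfl⟩
  | flow A1 A2 =>
    simp only [compile] at h
    generalize hS1 : compile tick targetsSat fireSources A1 = S1 at h
    generalize hS2 : compile tick targetsSat fireSources A2 = S2 at h
    cases h with
    | join1 h =>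
      subst hS1 hS2
      obtain ⟨B1', hB, rfl⟩ := bpelStep_of_compile_step A1 h
      exact ⟨.flow B1' A2, .flow1 hB, rfl⟩
    | join2 h =>
      subst hS1 hS2
      obtain ⟨B2', hB, rfl⟩ := bpelStep_of_compile_step A2 h
      exact ⟨.flow A1 B2', .flow2 hB, rfl⟩
    | joinFin =>
      obtain rfl := compile_eq_trig_fin_iff.mp hS1
      obtain rfl := compile_eq_trig_fin_iff.mp hS2
      exact ⟨.fin, .flowFin, rfl⟩
  | pick H1 H2 =>
    rcases esStep_choice_iff.mp h with h | h
    · obtain ⟨A, hA, rfl⟩ := ehStep_of_compileEH_step h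
      exact ⟨A, .pick1 hA, rfl⟩
    · obtain ⟨A, hA, rfl⟩ := ehStep_of_compileEH_step h
      exact ⟨A, .pick2 hA, rfl⟩
  | fin =>
    cases h with
    | trigEvt h => exact absurd h not_impTran_fin

end Compile

theorem isBisim_compile (tick : St → ℕ)
    (targetsSat : Option ((St → Prop) × List String) → St → Prop)
    (fireSources : Option (List (String × (St → Prop))) → St → St) :
    IsBisim tick targetsSat fireSources fun B _ S => S = compile tick targetsSat fireSources B := by
  rintro B s _ rfl
  refine ⟨fun B' t hB => ?_, fun δ S' t hS => bpelStep_of_compile_step B hS, rfl⟩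
  obtain ⟨δ, hS⟩ := compile_step_of_bpelStep hB
  exact ⟨δ, _, hS, rfl⟩

end BPEL

open PiCore BPEL in
/-- **Correctness of the translation from BPEL to PiCore:** every BPEL activity
is bisimilar to its translation at every state. -/
theorem compile_correct {St : Type}
    (tick : St → ℕ)
    (targetsSat : Option ((St → Prop) × List String) → St → Prop)
    (fireSources : Option (List (String × (St → Prop))) → St → St) :
    ∀ (B : Activity St) (s : St),
      Bisim tick targetsSat fireSources B s
        (compile tick targetsSat fireSources B) :=
  fun _ _ => ⟨_, isBisim_compile tick targetsSat fireSources, rfl⟩
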